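/- arXiv:2206.04840 — 4 statements merged into one kernel-verified Lean document; each statement's English description precedes it below -/
import Mathlib

section
/- Let f and g be strictly increasing homeomorphisms of ℝ, each with exactly one fixed point x₁ (resp. y₁), such that the sign of f(x) − x on (−∞, x₁) equals the sign of g(y) − y on (−∞, y₁), and similarly on (x₁, ∞) and (y₁, ∞). Then f and g are topologically conjugate by an increasing homeomorphism. -/
/-!
On each side of its fixed point, an increasing homeomorphism without further fixed points moves
every point in the same direction, so (after passing to the inverse if it moves points down) the
orbit of a point `a` is strictly increasing and, having no fixed point to accumulate at, sweeps out
the whole half-line. Interpolating linearly between `a` and `E a` and transporting by the powers of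
`E` turns this into an order isomorphism from `ℝ` onto the half-line which conjugates translation
by `1` to `E`. Two such charts conjugate `f` to `g` on each half-line, and these two conjugacies,
together with `x₁ ↦ y₁`, glue to the required homeomorphism.
-/

open Set Function

theorem Monotone.exists_mem_Ico_int {β : Type*} [LinearOrder β] {u : ℤ → β} (hu : Monotone u)
    {x : β} {m N : ℤ} (hm : u m ≤ x) (hN : x < u N) : ∃ n, x ∈ Ico (u n) (u (n + 1)) := by
  have hbdd : ∀ n, u n ≤ x → n ≤ N := fun n hn =>
    le_of_lt <| not_le.1 fun hNn => (hN.trans_le (hu hNn)).not_ge hn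
  obtain ⟨n, hn, hmax⟩ := Int.exists_greatest_of_bdd ⟨N, hbdd⟩ ⟨m, hm⟩
  exact ⟨n, hn, not_le.1 fun h => (hmax (n + 1) h).not_gt (lt_add_one n)⟩

structure IsOrderConjOn {α β : Type*} [Preorder α] [Preorder β] (h : α → β) (f : α → α)
    (g : β → β) (s : Set α) (t : Set β) : Prop where
  strictMonoOn : StrictMonoOn h s
  image_eq : h '' s = t
  semiconj : ∀ x ∈ s, h (f x) = g (h x)

namespace IsOrderConjOn

variable {α β : Type*}

theorem mapsTo [Preorder α] [Preorder β] {h : α → β} {f : α → α} {g : β → β} {s : Set α}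
    {t : Set β} (hc : IsOrderConjOn h f g s t) : MapsTo h s t :=
  hc.image_eq ▸ mapsTo_image h s

theorem of_semiconj {γ : Type*} [LinearOrder γ] [Nonempty γ] [Preorder α] [Preorder β]
    {φ : γ → α} {ψ : γ → β} {T : γ → γ} {f : α → α} {g : β → β} (hφ : StrictMono φ)
    (hψ : StrictMono ψ) (hf : Semiconj φ T f) (hg : Semiconj ψ T g) :
    IsOrderConjOn (ψ ∘ invFun φ) f g (range φ) (range ψ) where
  strictMonoOn := by
    rintro _ ⟨s, rfl⟩ _ ⟨t, rfl⟩ hst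
    simp only [comp_apply, leftInverse_invFun hφ.injective _]
    exact hψ (hφ.lt_iff_lt.1 hst)
  image_eq := by
    rw [← range_comp, comp_assoc, invFun_comp hφ.injective, comp_id]
  semiconj := by
    rintro _ ⟨s, rfl⟩
    simp only [comp_apply, ← hf s, leftInverse_invFun hφ.injective _, hg s]

theorem of_inv [Preorder α] [Preorder β] {h : α → β} {F : α ≃o α} {G : β ≃o β} {s : Set α}
    {t : Set β} (hc : IsOrderConjOn h ⇑F⁻¹ ⇑G⁻¹ s t) (hs : MapsTo F s s) :
    IsOrderConjOn h F G s t where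
  strictMonoOn := hc.strictMonoOn
  image_eq := hc.image_eq
  semiconj x hx := by
    have h_inv := hc.semiconj (F x) (hs hx)
    rw [RelIso.inv_apply_self] at h_inv
    rw [h_inv, RelIso.apply_inv_self]

theorem exists_orderIso_semiconj [LinearOrder α] [LinearOrder β] {hL hR : α → β} {F : α → α}
    {G : β → β} {c : α} {d : β} (hcL : IsOrderConjOn hL F G (Iio c) (Iio d))
    (hcR : IsOrderConjOn hR F G (Ioi c) (Ioi d)) (hF : StrictMono F) (hc : F c = c)
    (hd : G d = d) : ∃ h : α ≃o β, Semiconj h F G := by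
  let h : α → β := fun x => if x < c then hL x else if c < x then hR x else d
  have h_lt : ∀ x < c, h x = hL x := fun x hx => if_pos hx
  have h_gt : ∀ x, c < x → h x = hR x := fun x hx => by simp [h, hx, hx.not_gt]
  have h_c : h c = d := by simp [h]
  have hmono : StrictMono h := by
    refine StrictMonoOn.Iic_union_Ici (a := c) (fun x _ y hy hxy => ?_) (fun x hx y _ hxy => ?_)
    · rcases (show y ≤ c from hy).lt_or_eq with hy | rfl
      · rw [h_lt x (hxy.trans hy), h_lt y hy]
        exact hcL.strictMonoOn (hxy.trans hy) hy hxy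
      · rw [h_lt x hxy, h_c]
        exact hcL.mapsTo hxy
    · rcases (show c ≤ x from hx).lt_or_eq with hx | rfl
      · rw [h_gt x hx, h_gt y (hx.trans hxy)]
        exact hcR.strictMonoOn hx (hx.trans hxy) hxy
      · rw [h_c, h_gt y hxy]
        exact hcR.mapsTo hxy
  have hsurj : Surjective h := by
    intro y
    rcases lt_trichotomy y d with hy | rfl | hy
    · obtain ⟨x, hx, rfl⟩ := hcL.image_eq.ge hy
      exact ⟨x, h_lt x hx⟩
    · exact ⟨c, h_c⟩
    · obtain ⟨x, hx, rfl⟩ := hcR.image_eq.ge hy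
      exact ⟨x, h_gt x hx⟩
  refine ⟨hmono.orderIsoOfSurjective h hsurj, fun x => ?_⟩
  change h (F x) = G (h x)
  rcases lt_trichotomy x c with hx | rfl | hx
  · rw [h_lt x hx, h_lt (F x) ((hF hx).trans_eq hc), hcL.semiconj x hx]
  · rw [hc, h_c, hd]
  · rw [h_gt x hx, h_gt (F x) (hc.symm.trans_lt (hF hx)), hcR.semiconj x hx]

end IsOrderConjOn

namespace OrderIso

section Orbit

variable {α : Type*}

theorem zpow_apply_eq_self_of_apply_eq_self [LE α] (E : α ≃o α) {c : α} (hc : E c = c)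
    (n : ℤ) : (E ^ n) c = c :=
  (MulAction.stabilizer (α ≃o α) c).zpow_mem (MulAction.mem_stabilizer_iff.2 hc) n

theorem zpow_add_one_apply [LE α] (E : α ≃o α) (n : ℤ) (x : α) :
    (E ^ (n + 1)) x = (E ^ n) (E x) := by
  rw [zpow_add_one, RelIso.mul_apply]

theorem strictMono_zpow_apply [Preorder α] (E : α ≃o α) {a : α} (ha : a < E a) :
    StrictMono fun n : ℤ => (E ^ n) a :=
  strictMono_int_of_lt_succ fun n => by
    simpa only [zpow_add_one_apply] using (E ^ n).strictMono ha

section Lattice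

variable [ConditionallyCompleteLattice α] (E : α ≃o α) {a : α}

theorem isFixedPt_ciSup_zpow_apply (h : BddAbove (range fun n : ℤ => (E ^ n) a)) :
    IsFixedPt E (⨆ n : ℤ, (E ^ n) a) := by
  simp only [IsFixedPt, E.map_ciSup h, ← RelIso.mul_apply, ← zpow_one_add]
  exact (Equiv.addLeft 1).iSup_comp (g := fun n : ℤ => (E ^ n) a)

theorem isFixedPt_ciInf_zpow_apply (h : BddBelow (range fun n : ℤ => (E ^ n) a)) :
    IsFixedPt E (⨅ n : ℤ, (E ^ n) a) := by
  simp only [IsFixedPt, E.map_ciInf h, ← RelIso.mul_apply, ← zpow_one_add]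
  exact (Equiv.addLeft 1).iInf_comp (g := fun n : ℤ => (E ^ n) a)

end Lattice

/-- An increasing orbit can only stop short of `x` at a fixed point between `a` and `x`: its
supremum or infimum. -/
theorem exists_mem_Ico_zpow_apply [ConditionallyCompleteLinearOrder α] (E : α ≃o α) {a : α}
    (ha : a < E a) {x : α} (hx : ∀ y ∈ uIcc a x, E y ≠ y) :
    ∃ n : ℤ, x ∈ Ico ((E ^ n) a) ((E ^ (n + 1)) a) := by
  obtain ⟨m, hm⟩ : ∃ m : ℤ, (E ^ m) a ≤ x := by
    by_contra! h
    have hbdd : BddBelow (range fun n : ℤ => (E ^ n) a) := ⟨x, forall_mem_range.2 fun n => (h n).le⟩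
    refine hx _ (mem_uIcc.2 (Or.inr ⟨le_ciInf fun n => (h n).le, ?_⟩))
      (E.isFixedPt_ciInf_zpow_apply hbdd)
    simpa using ciInf_le hbdd 0
  obtain ⟨N, hN⟩ : ∃ N : ℤ, x < (E ^ N) a := by
    by_contra! h
    have hbdd : BddAbove (range fun n : ℤ => (E ^ n) a) := ⟨x, forall_mem_range.2 h⟩
    refine hx _ (mem_uIcc.2 (Or.inl ⟨?_, ciSup_le h⟩)) (E.isFixedPt_ciSup_zpow_apply hbdd)
    simpa using le_ciSup hbdd 0
  exact (E.strictMono_zpow_apply ha).monotone.exists_mem_Ico_int hm hN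

end Orbit

variable (E : ℝ ≃o ℝ) (a : ℝ)

/-- Affine from `[0, 1]` onto `[a, E a]` and extended by `Φ (s + 1) = E (Φ s)`: an inverse Abel
function of `E`. -/
noncomputable def orbitChart (s : ℝ) : ℝ :=
  (E ^ ⌊s⌋) (a + Int.fract s * (E a - a))

theorem orbitChart_add_intCast (s : ℝ) (n : ℤ) :
    E.orbitChart a (s + n) = (E ^ n) (E.orbitChart a s) := by
  rw [orbitChart, orbitChart, Int.floor_add_intCast, Int.fract_add_intCast, add_comm, zpow_add,
    RelIso.mul_apply]

theorem semiconj_orbitChart : Semiconj (E.orbitChart a) (· + 1) E := fun s => by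
  simpa using E.orbitChart_add_intCast a s 1

theorem orbitChart_of_mem_Ico {r : ℝ} (hr : r ∈ Ico 0 1) :
    E.orbitChart a r = a + r * (E a - a) := by
  rw [orbitChart, Int.floor_eq_zero_iff.2 hr, Int.fract_eq_self.2 hr, zpow_zero, RelIso.one_apply]

variable {E a}

theorem orbitChart_mem_Ico (ha : a < E a) (s : ℝ) :
    E.orbitChart a s ∈ Ico ((E ^ ⌊s⌋) a) ((E ^ (⌊s⌋ + 1)) a) := by
  have h₀ := Int.fract_nonneg s
  have h₁ := Int.fract_lt_one s
  rw [zpow_add_one_apply]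
  exact ⟨(E ^ ⌊s⌋).monotone (by nlinarith), (E ^ ⌊s⌋).strictMono (by nlinarith)⟩

theorem strictMono_orbitChart (ha : a < E a) : StrictMono (E.orbitChart a) := by
  intro s t hst
  rcases (Int.floor_mono hst.le).lt_or_eq with hlt | heq
  · calc E.orbitChart a s < (E ^ (⌊s⌋ + 1)) a := (orbitChart_mem_Ico ha s).2
      _ ≤ (E ^ ⌊t⌋) a := (E.strictMono_zpow_apply ha).monotone (Int.add_one_le_of_lt hlt)
      _ ≤ E.orbitChart a t := (orbitChart_mem_Ico ha t).1
  · have hfract : Int.fract s < Int.fract t := by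
      rw [Int.fract, Int.fract, heq]
      linarith
    rw [orbitChart, orbitChart, heq]
    exact (E ^ ⌊t⌋).strictMono (by gcongr)

theorem Ico_zpow_apply_subset_range_orbitChart (ha : a < E a) (n : ℤ) :
    Ico ((E ^ n) a) ((E ^ (n + 1)) a) ⊆ range (E.orbitChart a) := by
  rintro x ⟨hx₁, hx₂⟩
  rw [zpow_add_one_apply] at hx₂
  set t := (E ^ n).symm x
  have ht : t ∈ Ico a (E a) := ⟨(E ^ n).le_symm_apply.2 hx₁, (E ^ n).symm_apply_lt.2 hx₂⟩
  have hpos : 0 < E a - a := sub_pos.2 ha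
  have hr : (t - a) / (E a - a) ∈ Ico (0 : ℝ) 1 :=
    ⟨div_nonneg (sub_nonneg.2 ht.1) hpos.le, (div_lt_one hpos).2 (by linarith [ht.2])⟩
  refine ⟨(t - a) / (E a - a) + n, ?_⟩
  rw [orbitChart_add_intCast, orbitChart_of_mem_Ico _ _ hr, div_mul_cancel₀ _ hpos.ne',
    add_sub_cancel, OrderIso.apply_symm_apply]

theorem exists_range_orbitChart_eq_Iio {c : ℝ} (hc : E c = c) (hE : ∀ x < c, x < E x) :
    ∃ a, a < E a ∧ range (E.orbitChart a) = Iio c := by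
  have ha : c - 1 < c := sub_one_lt c
  refine ⟨c - 1, hE _ ha, Subset.antisymm ?_ fun x hx => ?_⟩
  · rintro _ ⟨s, rfl⟩
    calc E.orbitChart (c - 1) s < (E ^ (⌊s⌋ + 1)) (c - 1) := (orbitChart_mem_Ico (hE _ ha) s).2
      _ < (E ^ (⌊s⌋ + 1)) c := (E ^ _).strictMono ha
      _ = c := E.zpow_apply_eq_self_of_apply_eq_self hc _
  · obtain ⟨n, hn⟩ := E.exists_mem_Ico_zpow_apply (hE _ ha) fun y hy =>
      (hE y (hy.2.trans_lt (max_lt ha hx))).ne'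
    exact Ico_zpow_apply_subset_range_orbitChart (hE _ ha) n hn

theorem exists_range_orbitChart_eq_Ioi {c : ℝ} (hc : E c = c) (hE : ∀ x > c, x < E x) :
    ∃ a, a < E a ∧ range (E.orbitChart a) = Ioi c := by
  have ha : c < c + 1 := lt_add_one c
  refine ⟨c + 1, hE _ ha, Subset.antisymm ?_ fun x hx => ?_⟩
  · rintro _ ⟨s, rfl⟩
    calc c = (E ^ ⌊s⌋) c := (E.zpow_apply_eq_self_of_apply_eq_self hc _).symm
      _ < (E ^ ⌊s⌋) (c + 1) := (E ^ _).strictMono ha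
      _ ≤ E.orbitChart (c + 1) s := (orbitChart_mem_Ico (hE _ ha) s).1
  · obtain ⟨n, hn⟩ := E.exists_mem_Ico_zpow_apply (hE _ ha) fun y hy =>
      (hE y ((lt_min ha hx).trans_le hy.1)).ne'
    exact Ico_zpow_apply_subset_range_orbitChart (hE _ ha) n hn

end OrderIso

theorem exists_isOrderConjOn_of_range_orbitChart {s t : Set ℝ} {F G : ℝ ≃o ℝ}
    (hs : ∃ a, a < F a ∧ range (F.orbitChart a) = s)
    (ht : ∃ b, b < G b ∧ range (G.orbitChart b) = t) : ∃ h, IsOrderConjOn h F G s t := by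
  obtain ⟨a, ha, rfl⟩ := hs
  obtain ⟨b, hb, rfl⟩ := ht
  exact ⟨_, .of_semiconj (OrderIso.strictMono_orbitChart ha) (OrderIso.strictMono_orbitChart hb)
    (F.semiconj_orbitChart a) (G.semiconj_orbitChart b)⟩

theorem exists_isOrderConjOn_Iio (F G : ℝ ≃o ℝ) {c d : ℝ} (hc : F c = c) (hd : G d = d)
    (hFG : (∀ x < c, x < F x) ∧ (∀ y < d, y < G y) ∨ (∀ x < c, F x < x) ∧ (∀ y < d, G y < y)) :
    ∃ h, IsOrderConjOn h F G (Iio c) (Iio d) := by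
  rcases hFG with ⟨hF, hG⟩ | ⟨hF, hG⟩
  · exact exists_isOrderConjOn_of_range_orbitChart
      (F.exists_range_orbitChart_eq_Iio hc hF) (G.exists_range_orbitChart_eq_Iio hd hG)
  · obtain ⟨h, hh⟩ := exists_isOrderConjOn_of_range_orbitChart
      (F⁻¹.exists_range_orbitChart_eq_Iio (F.symm_apply_eq.2 hc.symm)
        fun x hx => F.lt_symm_apply.2 (hF x hx))
      (G⁻¹.exists_range_orbitChart_eq_Iio (G.symm_apply_eq.2 hd.symm)
        fun y hy => G.lt_symm_apply.2 (hG y hy))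
    exact ⟨h, hh.of_inv fun x hx => (F.strictMono hx).trans_eq hc⟩

theorem exists_isOrderConjOn_Ioi (F G : ℝ ≃o ℝ) {c d : ℝ} (hc : F c = c) (hd : G d = d)
    (hFG : (∀ x > c, x < F x) ∧ (∀ y > d, y < G y) ∨ (∀ x > c, F x < x) ∧ (∀ y > d, G y < y)) :
    ∃ h, IsOrderConjOn h F G (Ioi c) (Ioi d) := by
  rcases hFG with ⟨hF, hG⟩ | ⟨hF, hG⟩
  · exact exists_isOrderConjOn_of_range_orbitChart
      (F.exists_range_orbitChart_eq_Ioi hc hF) (G.exists_range_orbitChart_eq_Ioi hd hG)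
  · obtain ⟨h, hh⟩ := exists_isOrderConjOn_of_range_orbitChart
      (F⁻¹.exists_range_orbitChart_eq_Ioi (F.symm_apply_eq.2 hc.symm)
        fun x hx => F.lt_symm_apply.2 (hF x hx))
      (G⁻¹.exists_range_orbitChart_eq_Ioi (G.symm_apply_eq.2 hd.symm)
        fun y hy => G.lt_symm_apply.2 (hG y hy))
    exact ⟨h, hh.of_inv fun x hx => hc.symm.trans_lt (F.strictMono hx)⟩

theorem forall_lt_or_forall_gt_of_sign_sub_eq {s t : Set ℝ} {f g : ℝ → ℝ} {x₀ y₀ : ℝ}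
    (hx₀ : x₀ ∈ s) (hy₀ : y₀ ∈ t) (hfx₀ : f x₀ ≠ x₀)
    (hfg : ∀ x ∈ s, ∀ y ∈ t, Real.sign (f x - x) = Real.sign (g y - y)) :
    (∀ x ∈ s, x < f x) ∧ (∀ y ∈ t, y < g y) ∨ (∀ x ∈ s, f x < x) ∧ (∀ y ∈ t, g y < y) := by
  have hσ := Real.sign_apply_eq_of_ne_zero _ (sub_ne_zero.2 hfx₀)
  have hpos : ∀ r : ℝ, Real.sign r = Real.sign (f x₀ - x₀) → 0 < Real.sign (f x₀ - x₀) * r := by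
    intro r hr
    rw [← hr]
    refine Real.sign_mul_pos_of_ne_zero r fun h0 => ?_
    rw [h0, Real.sign_zero] at hr
    rcases hσ with hσ | hσ <;> linarith
  have hf : ∀ x ∈ s, 0 < Real.sign (f x₀ - x₀) * (f x - x) := fun x hx =>
    hpos _ ((hfg x hx y₀ hy₀).trans (hfg x₀ hx₀ y₀ hy₀).symm)
  have hg : ∀ y ∈ t, 0 < Real.sign (f x₀ - x₀) * (g y - y) := fun y hy =>
    hpos _ (hfg x₀ hx₀ y hy).symm
  rcases hσ with hσ | hσ <;> simp only [hσ] at hf hg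
  · exact .inr ⟨fun x hx => by linarith [hf x hx], fun y hy => by linarith [hg y hy]⟩
  · exact .inl ⟨fun x hx => by linarith [hf x hx], fun y hy => by linarith [hg y hy]⟩

theorem conjugacy_one_fixed_point_general
    (f g : ℝ → ℝ) (x₁ y₁ : ℝ)
    (hfmono : StrictMono f) (hfbij : Function.Bijective f)
    (hgmono : StrictMono g) (hgbij : Function.Bijective g)
    (hx₁ : f x₁ = x₁) (hy₁ : g y₁ = y₁)
    (hfunique : ∀ x : ℝ, f x = x → x = x₁)
    (hleft : ∀ x < x₁, ∀ y < y₁, Real.sign (f x - x) = Real.sign (g y - y))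
    (hright : ∀ x > x₁, ∀ y > y₁, Real.sign (f x - x) = Real.sign (g y - y)) :
    ∃ h : ℝ → ℝ, StrictMono h ∧ Continuous h ∧ Function.Bijective h ∧
      h ∘ f = g ∘ h := by
  let F := hfmono.orderIsoOfSurjective f hfbij.2
  let G := hgmono.orderIsoOfSurjective g hgbij.2
  obtain ⟨hL, hcL⟩ := exists_isOrderConjOn_Iio F G hx₁ hy₁
    (forall_lt_or_forall_gt_of_sign_sub_eq (sub_one_lt x₁) (sub_one_lt y₁)
      (fun h => by linarith [hfunique _ h]) hleft)
  obtain ⟨hR, hcR⟩ := exists_isOrderConjOn_Ioi F G hx₁ hy₁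
    (forall_lt_or_forall_gt_of_sign_sub_eq (lt_add_one x₁) (lt_add_one y₁)
      (fun h => by linarith [hfunique _ h]) hright)
  obtain ⟨h, hh⟩ := hcL.exists_orderIso_semiconj hcR hfmono hx₁ hy₁
  exact ⟨h, h.strictMono, h.continuous, h.bijective, hh.comp_eq⟩

theorem conjugacy_one_fixed_point
    (f g : ℝ → ℝ) (x₁ y₁ : ℝ)
    (hfmono : StrictMono f) (hfcont : Continuous f) (hfbij : Function.Bijective f)
    (hgmono : StrictMono g) (hgcont : Continuous g) (hgbij : Function.Bijective g)
    (hx₁ : f x₁ = x₁) (hy₁ : g y₁ = y₁)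
    (hfunique : ∀ x : ℝ, f x = x → x = x₁)
    (hgunique : ∀ y : ℝ, g y = y → y = y₁)
    (hleft : ∀ x < x₁, ∀ y < y₁, Real.sign (f x - x) = Real.sign (g y - y))
    (hright : ∀ x > x₁, ∀ y > y₁, Real.sign (f x - x) = Real.sign (g y - y)) :
    ∃ h : ℝ → ℝ, StrictMono h ∧ Continuous h ∧ Function.Bijective h ∧
      h ∘ f = g ∘ h :=
  conjugacy_one_fixed_point_general f g x₁ y₁ hfmono hfbij hgmono hgbij hx₁ hy₁ hfunique hleft
    hright
end

section
/- Suppose f : ℝ × ℝ → ℝ is C^r with r ≥ 2, f(0,μ) = 0 for all μ, f_x(0,0) = 1, f_{x μ}(0,0) ≠ 0 and f_{xx}(0,0) ≠ 0. Then there exist ε > 0 and a C^{r−1} function x : (−ε, ε) → ℝ with x(0) = 0 and x'(0) = −2 f_{x μ}(0,0)/f_{xx}(0,0), such that for each μ, x(μ) is a fixed point of f(·, μ), i.e. f(x(μ), μ) = x(μ), and x(μ) ≠ 0 for μ ≠ 0. -/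
/-!
By Hadamard's lemma, `f (x, μ) = x * h (x, μ)` with `h (x, μ) = ∫₀¹ f_x (t x, μ) dt` of class
`C^{r-1}`, so the nonzero fixed points of `f (·, μ)` are the solutions of `h (x, μ) = 1`.
At the origin `h = f_x = 1`, `h_μ = f_{xμ} ≠ 0` and, by L'Hôpital, `h_x = f_{xx} / 2 ≠ 0`.
The implicit function theorem solves `h (x, μ) = 1` by a `C^{r-1}` curve `x (μ)` with
`x' (0) = -h_μ / h_x = -2 f_{xμ} / f_{xx}`; it avoids the axis `x = 0` for `μ ≠ 0` because
`h (0, μ) = f_x (0, μ)` has nonzero derivative at `μ = 0`.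
-/

open Set Filter Topology Metric MeasureTheory

universe u

theorem hasFDerivAt_parametric_intervalIntegral_of_contDiff {H E : Type*} [NormedAddCommGroup H]
    [NormedSpace ℝ H] [ProperSpace H] [NormedAddCommGroup E] [NormedSpace ℝ E] {K : H × ℝ → E}
    (hK : ContDiff ℝ 1 K) (a b : ℝ) (x₀ : H) :
    HasFDerivAt (fun x => ∫ t in a..b, K (x, t))
      (∫ t in a..b, fderiv ℝ K (x₀, t) ∘L ContinuousLinearMap.inl ℝ H ℝ) x₀ := by
  set K' : H × ℝ → H →L[ℝ] E := fun q => fderiv ℝ K q ∘L ContinuousLinearMap.inl ℝ H ℝ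
  have hK'c : Continuous K' := (hK.continuous_fderiv one_ne_zero).clm_comp continuous_const
  obtain ⟨C, hC⟩ := ((isCompact_closedBall x₀ 1).prod isCompact_uIcc).exists_bound_of_continuousOn
    hK'c.continuousOn
  refine intervalIntegral.hasFDerivAt_integral_of_dominated_of_fderiv_le
    (F' := fun x t => K' (x, t)) (bound := fun _ => C) (ball_mem_nhds x₀ one_pos)
    (.of_forall fun x => (hK.continuous.comp (Continuous.prodMk_right x)).aestronglyMeasurable)
    ((hK.continuous.comp (Continuous.prodMk_right x₀)).intervalIntegrable a b)
    (hK'c.comp (Continuous.prodMk_right x₀)).aestronglyMeasurable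
    (ae_of_all _ fun t ht x hx => hC (x, t) ⟨ball_subset_closedBall hx, uIoc_subset_uIcc ht⟩)
    intervalIntegrable_const (ae_of_all _ fun t _ x _ => ?_)
  exact ((hK.differentiable one_ne_zero) (x, t)).hasFDerivAt.comp x (hasFDerivAt_prodMk_left x t)

-- `H` and `E` share a universe because the induction passes to the codomain `H →L[ℝ] E`.
theorem contDiff_parametric_intervalIntegral_of_contDiff {H E : Type u} [NormedAddCommGroup H]
    [NormedSpace ℝ H] [ProperSpace H] [NormedAddCommGroup E] [NormedSpace ℝ E] [CompleteSpace E]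
    {n : ℕ} {K : H × ℝ → E}
    (hK : ContDiff ℝ n K) (a b : ℝ) :
    ContDiff ℝ n (fun x => ∫ t in a..b, K (x, t)) := by
  induction n generalizing E with
  | zero =>
    rw [Nat.cast_zero, contDiff_zero] at hK ⊢
    exact intervalIntegral.continuous_parametric_intervalIntegral_of_continuous'
      (f := fun x t => K (x, t)) hK a b
  | succ n ih =>
    have hK1 : ContDiff ℝ 1 K := hK.of_le (by exact_mod_cast Nat.succ_pos n)
    have hderiv := hasFDerivAt_parametric_intervalIntegral_of_contDiff hK1 a b
    rw [Nat.cast_succ, contDiff_succ_iff_fderiv]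
    refine ⟨fun x => (hderiv x).differentiableAt, by simp, ?_⟩
    rw [funext fun x => (hderiv x).fderiv]
    exact ih ((hK.fderiv_right le_rfl).clm_comp contDiff_const)

section PartialDerivatives

variable {E F : Type*} [NormedAddCommGroup E] [NormedSpace ℝ E]
  [NormedAddCommGroup F] [NormedSpace ℝ F]

theorem HasFDerivAt.hasDerivAt_partial_fst {f : ℝ × E → F} {L : ℝ × E →L[ℝ] F} {x : ℝ} {μ : E}
    (hf : HasFDerivAt f L (x, μ)) : HasDerivAt (fun x => f (x, μ)) (L (1, 0)) x :=
  hf.comp_hasDerivAt x ((hasDerivAt_id x).prodMk (hasDerivAt_const x μ))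

theorem HasFDerivAt.hasDerivAt_partial_snd {f : E × ℝ → F} {L : E × ℝ →L[ℝ] F} {x : E} {μ : ℝ}
    (hf : HasFDerivAt f L (x, μ)) : HasDerivAt (fun μ => f (x, μ)) (L (0, 1)) μ :=
  hf.comp_hasDerivAt μ ((hasDerivAt_const μ x).prodMk (hasDerivAt_id μ))

end PartialDerivatives

theorem hasDerivAt_factor_of_eq_mul {φ ψ φ' : ℝ → ℝ} {a : ℝ} (hφψ : ∀ᶠ x in 𝓝 0, φ x = x * ψ x)
    (hφ : ∀ᶠ x in 𝓝 0, HasDerivAt φ (φ' x) x) (hφ' : HasDerivAt φ' a 0) (hψ0 : ψ 0 = φ' 0) :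
    HasDerivAt ψ (a / 2) 0 := by
  rw [hasDerivAt_iff_tendsto_slope]
  -- L'Hôpital applies to this expression of the slope of `ψ`, and yields the slope of `φ'` over 2.
  have hslope : (fun x => (φ x - x * φ' 0) / x ^ 2) =ᶠ[𝓝[≠] 0] slope ψ 0 := by
    filter_upwards [self_mem_nhdsWithin, nhdsWithin_le_nhds hφψ] with x (hx : x ≠ 0) hx'
    rw [slope_def_field, hx', hψ0]
    field_simp
    ring
  refine (HasDerivAt.lhopital_zero_nhdsNE (f' := fun x => φ' x - φ' 0) (g' := fun x => 2 * x)
    (nhdsWithin_le_nhds (hφ.mono fun x hx => hx.sub (hasDerivAt_mul_const (φ' 0))))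
    (.of_forall fun x => by simpa using hasDerivAt_pow 2 x)
    (eventually_nhdsWithin_of_forall fun x (hx : x ≠ 0) => by positivity)
    ?_ ?_ ?_).congr' hslope
  · have hφ0 : φ 0 = 0 := by simpa using hφψ.self_of_nhds
    have := (hφ.self_of_nhds.continuousAt.sub (continuous_mul_const (φ' 0)).continuousAt).tendsto
    convert this.mono_left nhdsWithin_le_nhds using 2
    show (0 : ℝ) = φ 0 - 0 * φ' 0
    simp [hφ0]
  · simpa using ((continuous_pow 2).tendsto' (0 : ℝ) 0 (by simp)).mono_left nhdsWithin_le_nhds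
  · refine ((hasDerivAt_iff_tendsto_slope.1 hφ').div_const 2).congr' ?_
    filter_upwards with x
    rw [slope_def_field, sub_zero, div_div, mul_comm]

section HadamardQuotient

variable {E F : Type*} [NormedAddCommGroup E] [NormedSpace ℝ E]
  [NormedAddCommGroup F] [NormedSpace ℝ F] [CompleteSpace F]

noncomputable def hadamardQuotient (f : ℝ × E → F) (p : ℝ × E) : F :=
  ∫ t in (0 : ℝ)..1, fderiv ℝ f (t * p.1, p.2) (1, 0)

theorem hadamardQuotient_zero_left {f : ℝ × E → F} {μ : E} (hf : DifferentiableAt ℝ f (0, μ)) :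
    hadamardQuotient f (0, μ) = deriv (fun x => f (x, μ)) 0 := by
  simp [hadamardQuotient, hf.hasFDerivAt.hasDerivAt_partial_fst.deriv]

theorem eq_smul_hadamardQuotient {f : ℝ × E → F} (hf : ContDiff ℝ 1 f)
    (hf0 : ∀ μ, f (0, μ) = 0) (p : ℝ × E) : f p = p.1 • hadamardQuotient f p := by
  obtain ⟨x, μ⟩ := p
  rcases eq_or_ne x 0 with rfl | hx
  · simpa using hf0 μ
  have hpartial : ∀ s, HasDerivAt (fun s => f (s, μ)) (fderiv ℝ f (s, μ) (1, 0)) s := fun s =>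
    ((hf.differentiable one_ne_zero) (s, μ)).hasFDerivAt.hasDerivAt_partial_fst
  have hcont : Continuous fun s => fderiv ℝ f (s, μ) (1, 0) :=
    ((hf.continuous_fderiv one_ne_zero).comp (Continuous.prodMk_left μ)).clm_apply
      continuous_const
  have hftc : ∫ s in (0 : ℝ)..x, fderiv ℝ f (s, μ) (1, 0) = f (x, μ) := by
    rw [intervalIntegral.integral_eq_sub_of_hasDerivAt (fun s _ => hpartial s)
      (hcont.intervalIntegrable 0 x), hf0, sub_zero]
  have hscale := intervalIntegral.integral_comp_mul_right (a := 0) (b := 1)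
    (fun s => fderiv ℝ f (s, μ) (1, 0)) hx
  simp only [zero_mul, one_mul, hftc] at hscale
  simp only [hadamardQuotient, hscale, smul_smul, mul_inv_cancel₀ hx, one_smul]

end HadamardQuotient

theorem contDiff_hadamardQuotient {E F : Type u} [NormedAddCommGroup E] [NormedSpace ℝ E]
    [ProperSpace E] [NormedAddCommGroup F] [NormedSpace ℝ F] [CompleteSpace F] {n : ℕ}
    {f : ℝ × E → F} (hf : ContDiff ℝ (n + 1) f) : ContDiff ℝ n (hadamardQuotient f) := by
  have hK : ContDiff ℝ n fun q : (ℝ × E) × ℝ => fderiv ℝ f (q.2 * q.1.1, q.1.2) (1, 0) :=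
    ((hf.fderiv_right le_rfl).comp
      ((contDiff_snd.mul contDiff_fst.fst).prodMk contDiff_fst.snd)).clm_apply contDiff_const
  exact contDiff_parametric_intervalIntegral_of_contDiff hK 0 1

theorem hasDerivAt_hadamardQuotient_zero_left {E : Type*} [NormedAddCommGroup E]
    [NormedSpace ℝ E] {f : ℝ × E → ℝ} (hf : ContDiff ℝ 2 f) (hf0 : ∀ μ, f (0, μ) = 0) (μ : E) :
    HasDerivAt (fun x => hadamardQuotient f (x, μ))
      (iteratedDeriv 2 (fun x => f (x, μ)) 0 / 2) 0 := by
  have hφ : ContDiff ℝ 2 fun x => f (x, μ) := hf.comp (contDiff_id.prodMk contDiff_const)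
  refine hasDerivAt_factor_of_eq_mul
    (.of_forall fun x => eq_smul_hadamardQuotient (hf.of_le one_le_two) hf0 (x, μ))
    (.of_forall fun x => (hφ.differentiable two_ne_zero x).hasDerivAt) ?_
    (hadamardQuotient_zero_left (hf.differentiable two_ne_zero _))
  rw [iteratedDeriv_succ, iteratedDeriv_one]
  exact (hφ.differentiable_deriv_two 0).hasDerivAt

theorem ContinuousLinearMap.isInvertible_of_apply_one_ne_zero {𝕜 : Type*}
    [NontriviallyNormedField 𝕜] {T : 𝕜 →L[𝕜] 𝕜} (hT : T 1 ≠ 0) : T.IsInvertible :=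
  ⟨ContinuousLinearEquiv.unitsEquivAut 𝕜 (Units.mk0 _ hT), by ext; simp⟩

theorem deriv_eq_neg_div_of_eventually_apply_eq {h : ℝ × ℝ → ℝ} {X : ℝ → ℝ} {μ₀ a b : ℝ}
    (hh : DifferentiableAt ℝ h (X μ₀, μ₀)) (hX : DifferentiableAt ℝ X μ₀)
    (hx : HasDerivAt (fun x => h (x, μ₀)) a (X μ₀)) (hμ : HasDerivAt (fun μ => h (X μ₀, μ)) b μ₀)
    (ha : a ≠ 0) (hlevel : ∀ᶠ μ in 𝓝 μ₀, h (X μ, μ) = h (X μ₀, μ₀)) :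
    deriv X μ₀ = -b / a := by
  set L := fderiv ℝ h (X μ₀, μ₀)
  have hL := hh.hasFDerivAt
  have hLa : L (1, 0) = a := hL.hasDerivAt_partial_fst.unique hx
  have hLb : L (0, 1) = b := hL.hasDerivAt_partial_snd.unique hμ
  have hcurve : HasDerivAt (fun μ => h (X μ, μ)) (L (deriv X μ₀, 1)) μ₀ :=
    hL.comp_hasDerivAt (f := fun μ => (X μ, μ)) μ₀ (hX.hasDerivAt.prodMk (hasDerivAt_id μ₀))
  have hzero : L (deriv X μ₀, 1) = 0 :=
    hcurve.unique ((hasDerivAt_const μ₀ _).congr_of_eventuallyEq hlevel)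
  have hsplit : ((deriv X μ₀, 1) : ℝ × ℝ) = deriv X μ₀ • ((1, 0) : ℝ × ℝ) + (0, 1) := by simp
  rw [hsplit, map_add, map_smul, hLa, hLb, smul_eq_mul] at hzero
  field_simp
  linarith

theorem exists_implicitFunction_of_hasDerivAt {h : ℝ × ℝ → ℝ} {n : WithTop ℕ∞} {x₀ μ₀ a b : ℝ}
    (hh : ContDiffAt ℝ n h (x₀, μ₀)) (hn : n ≠ 0) (hx : HasDerivAt (fun x => h (x, μ₀)) a x₀)
    (hμ : HasDerivAt (fun μ => h (x₀, μ)) b μ₀) (ha : a ≠ 0) :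
    ∃ X : ℝ → ℝ, X μ₀ = x₀ ∧ ContDiffAt ℝ n X μ₀ ∧ deriv X μ₀ = -b / a ∧
      ∀ᶠ μ in 𝓝 μ₀, h (X μ, μ) = h (x₀, μ₀) := by
  -- Mathlib's implicit function solves for the second coordinate, so swap the arguments of `h`.
  set k : ℝ × ℝ → ℝ := fun q => h (q.2, q.1)
  have hk : ContDiffAt ℝ n k (μ₀, x₀) :=
    hh.comp (μ₀, x₀) (contDiff_snd.prodMk contDiff_fst).contDiffAt
  have hinv : (fderiv ℝ k (μ₀, x₀) ∘L .inr ℝ ℝ ℝ).IsInvertible := by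
    refine ContinuousLinearMap.isInvertible_of_apply_one_ne_zero ?_
    have := (hk.differentiableAt hn).hasFDerivAt.hasDerivAt_partial_snd.unique hx
    simpa [this]
  set X := hk.implicitFunction hn hinv
  have hX0 : X μ₀ = x₀ := hk.implicitFunction_apply_self hn hinv
  have hXc : ContDiffAt ℝ n X μ₀ := hk.contDiffAt_implicitFunction hn hinv
  have hlevel : ∀ᶠ μ in 𝓝 μ₀, h (X μ, μ) = h (x₀, μ₀) :=
    hk.eventually_apply_implicitFunction hn hinv
  refine ⟨X, hX0, hXc, ?_, hlevel⟩
  rw [← hX0] at hh hx hμ hlevel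
  exact deriv_eq_neg_div_of_eventually_apply_eq (hh.differentiableAt hn) (hXc.differentiableAt hn)
    hx hμ ha hlevel

theorem exists_branch_off_axis {h : ℝ × ℝ → ℝ} {n : ℕ} {a b : ℝ}
    (hh : ContDiffAt ℝ n h (0, 0)) (hn : n ≠ 0) (hx : HasDerivAt (fun x => h (x, 0)) a 0)
    (hμ : HasDerivAt (fun μ => h (0, μ)) b 0) (ha : a ≠ 0) (hb : b ≠ 0) :
    ∃ ε > 0, ∃ X : ℝ → ℝ, ContDiffOn ℝ n X (Ioo (-ε) ε) ∧ X 0 = 0 ∧ deriv X 0 = -b / a ∧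
      ∀ μ ∈ Ioo (-ε) ε, h (X μ, μ) = h (0, 0) ∧ (μ ≠ 0 → X μ ≠ 0) := by
  obtain ⟨X, hX0, hXc, hXd, hlevel⟩ :=
    exists_implicitFunction_of_hasDerivAt hh (by exact_mod_cast hn) hx hμ ha
  have hoff : ∀ᶠ μ in 𝓝 0, μ ≠ 0 → h (0, μ) ≠ h (0, 0) :=
    eventually_nhdsWithin_iff.1 (hμ.eventually_ne hb)
  obtain ⟨ε, hε, hball⟩ := Metric.eventually_nhds_iff_ball.1
    ((hXc.eventually (by simp)).and (hlevel.and hoff))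
  rw [Real.ball_eq_Ioo, zero_sub, zero_add] at hball
  refine ⟨ε, hε, X, fun μ hμ => (hball μ hμ).1.contDiffWithinAt, hX0, hXd, fun μ hμ => ?_⟩
  obtain ⟨-, hXμ, hμ_off⟩ := hball μ hμ
  exact ⟨hXμ, fun hμ0 hX => hμ_off hμ0 (hX ▸ hXμ)⟩

theorem transcritical_skeleton
    (f : ℝ × ℝ → ℝ) (r : ℕ) (hr : 2 ≤ r)
    (hsmooth : ContDiff ℝ r f)
    (hfix : ∀ μ : ℝ, f (0, μ) = 0)
    (hfx : deriv (fun x => f (x, 0)) 0 = 1)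
    (hfxμ : deriv (fun μ => deriv (fun x => f (x, μ)) 0) 0 ≠ 0)
    (hfxx : iteratedDeriv 2 (fun x => f (x, 0)) 0 ≠ 0) :
    ∃ ε > 0, ∃ x : ℝ → ℝ,
      ContDiffOn ℝ (r - 1) x (Ioo (-ε) ε) ∧
      x 0 = 0 ∧
      deriv x 0 = -2 * deriv (fun μ => deriv (fun x => f (x, μ)) 0) 0
        / iteratedDeriv 2 (fun x => f (x, 0)) 0 ∧
      ∀ μ ∈ Ioo (-ε) ε, f (x μ, μ) = x μ ∧ (μ ≠ 0 → x μ ≠ 0) := by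
  have hf2 : ContDiff ℝ 2 f := hsmooth.of_le (by exact_mod_cast hr)
  have hh : ContDiff ℝ (r - 1 : ℕ) (hadamardQuotient f) := contDiff_hadamardQuotient <| by
    rwa [← Nat.cast_succ, Nat.succ_eq_add_one, Nat.sub_add_cancel (by omega : 1 ≤ r)]
  have hh0 : ∀ μ, hadamardQuotient f (0, μ) = deriv (fun x => f (x, μ)) 0 := fun μ =>
    hadamardQuotient_zero_left (hf2.differentiable two_ne_zero _)
  have hhμ : HasDerivAt (fun μ => hadamardQuotient f (0, μ))
      (deriv (fun μ => deriv (fun x => f (x, μ)) 0) 0) 0 := by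
    rw [← funext hh0]
    exact (hh.differentiable (by exact_mod_cast (by omega : r - 1 ≠ 0)) (0, 0)).hasFDerivAt
      |>.hasDerivAt_partial_snd.differentiableAt.hasDerivAt
  obtain ⟨ε, hε, X, hXc, hX0, hXd, hX⟩ := exists_branch_off_axis hh.contDiffAt (by omega)
    (hasDerivAt_hadamardQuotient_zero_left hf2 hfix 0) hhμ (div_ne_zero hfxx two_ne_zero) hfxμ
  refine ⟨ε, hε, X, (by norm_cast : ((r - 1 : ℕ) : WithTop ℕ∞) = r - 1) ▸ hXc, hX0,
    by rw [hXd]; field_simp, fun μ hμ => ⟨?_, (hX μ hμ).2⟩⟩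
  rw [eq_smul_hadamardQuotient (hf2.of_le one_le_two) hfix, (hX μ hμ).1, hh0, hfx, smul_eq_mul,
    mul_one]
end

section
/- Suppose f : ℝ × ℝ → ℝ is C^r, r ≥ 2, with f(0,0) = 0, f_x(0,0) = 1, f_μ(0,0) > 0 and f_{xx}(0,0) < 0. Then there is a neighbourhood N₀ of (0,0) in ℝ² such that f(·, μ) has no fixed points in N₀ for μ < 0, exactly one for μ = 0 (namely x = 0), and exactly two for small μ > 0. -/
/-!
Put `g (x, μ) = f (x, μ) - x`. Its partial derivatives `g_xx` and `g_μ` are continuous with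
`g_xx (0, 0) < 0 < g_μ (0, 0)`, so on a small square `[-δ, δ]²` every slice `g (·, μ)` is strictly
concave and every slice `g (x, ·)` is strictly increasing. Since `g (0, 0) = 0 = g_x (0, 0)`, the
concave function `g (·, 0)` has its strict maximum `0` at `x = 0`. Monotonicity in `μ` then keeps
`g (·, μ)` negative for `μ < 0`; for small `μ > 0` it makes `g (0, μ) > 0` while `g (±δ, μ) < 0`
persists by continuity, so the intermediate value theorem gives two zeros and strict concavity
forbids a third.
-/

open Set Topology

noncomputable def partialFst (f : ℝ × ℝ → ℝ) (p : ℝ × ℝ) : ℝ := fderiv ℝ f p (1, 0)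

noncomputable def partialSnd (f : ℝ × ℝ → ℝ) (p : ℝ × ℝ) : ℝ := fderiv ℝ f p (0, 1)

section PartialDerivatives

variable {f : ℝ × ℝ → ℝ}

theorem hasDerivAt_partialFst {x μ : ℝ} (hf : DifferentiableAt ℝ f (x, μ)) :
    HasDerivAt (fun x => f (x, μ)) (partialFst f (x, μ)) x :=
  hf.hasFDerivAt.comp_hasDerivAt x ((hasDerivAt_id x).prodMk (hasDerivAt_const x μ))

theorem hasDerivAt_partialSnd {x μ : ℝ} (hf : DifferentiableAt ℝ f (x, μ)) :
    HasDerivAt (fun μ => f (x, μ)) (partialSnd f (x, μ)) μ :=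
  hf.hasFDerivAt.comp_hasDerivAt μ ((hasDerivAt_const μ x).prodMk (hasDerivAt_id μ))

theorem contDiff_partialFst {m n : WithTop ℕ∞} (hf : ContDiff ℝ n f) (hmn : m + 1 ≤ n) :
    ContDiff ℝ m (partialFst f) :=
  (ContinuousLinearMap.apply ℝ ℝ ((1 : ℝ), (0 : ℝ))).contDiff.comp (hf.fderiv_right hmn)

theorem contDiff_partialSnd {m n : WithTop ℕ∞} (hf : ContDiff ℝ n f) (hmn : m + 1 ≤ n) :
    ContDiff ℝ m (partialSnd f) :=
  (ContinuousLinearMap.apply ℝ ℝ ((0 : ℝ), (1 : ℝ))).contDiff.comp (hf.fderiv_right hmn)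

theorem iterate_deriv_two_eq_partialFst_partialFst (hf : ContDiff ℝ 2 f) (x μ : ℝ) :
    deriv^[2] (fun x => f (x, μ)) x = partialFst (partialFst f) (x, μ) := by
  have hfd : Differentiable ℝ f := hf.differentiable (by norm_num)
  have hf₁d : Differentiable ℝ (partialFst f) :=
    (contDiff_partialFst (m := 1) hf (by norm_num)).differentiable (by norm_num)
  have hderiv : deriv (fun x => f (x, μ)) = fun x => partialFst f (x, μ) :=
    funext fun x => (hasDerivAt_partialFst (hfd _)).deriv
  rw [Function.iterate_succ_apply, Function.iterate_one, hderiv]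
  exact (hasDerivAt_partialFst (hf₁d _)).deriv

theorem strictConcaveOn_of_partialFst_partialFst_neg (hf : ContDiff ℝ 2 f) {s : Set ℝ}
    (hs : Convex ℝ s) {μ : ℝ} (hneg : ∀ x ∈ s, partialFst (partialFst f) (x, μ) < 0) :
    StrictConcaveOn ℝ s (fun x => f (x, μ)) :=
  strictConcaveOn_of_deriv2_neg' hs
    (hf.continuous.comp (Continuous.prodMk_left μ)).continuousOn fun x hx => by
    rw [iterate_deriv_two_eq_partialFst_partialFst hf]
    exact hneg x hx

theorem strictMonoOn_of_partialSnd_pos (hf : Differentiable ℝ f) {s : Set ℝ}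
    (hs : Convex ℝ s) {x : ℝ} (hpos : ∀ μ ∈ s, 0 < partialSnd f (x, μ)) :
    StrictMonoOn (fun μ => f (x, μ)) s :=
  strictMonoOn_of_deriv_pos hs
    (hf.continuous.comp (Continuous.prodMk_right x)).continuousOn fun μ hμ => by
    rw [(hasDerivAt_partialSnd (hf _)).deriv]
    exact hpos μ (interior_subset hμ)

end PartialDerivatives

theorem exists_forall_Icc_of_eventually_nhds_zero {P : ℝ × ℝ → Prop}
    (h : ∀ᶠ p in 𝓝 (0 : ℝ × ℝ), P p) :
    ∃ δ > 0, ∀ x ∈ Icc (-δ) δ, ∀ μ ∈ Icc (-δ) δ, P (x, μ) := by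
  obtain ⟨ε, hε, hP⟩ := Metric.eventually_nhds_iff.1 h
  refine ⟨ε / 2, by positivity, fun x hx μ hμ => hP ?_⟩
  rw [Prod.dist_eq, Prod.fst_zero, Prod.snd_zero, Real.dist_0_eq_abs, Real.dist_0_eq_abs]
  exact max_lt (by linarith [abs_le.2 hx]) (by linarith [abs_le.2 hμ])

section StrictConcave

variable {S : Set ℝ} {g : ℝ → ℝ}

theorem StrictConcaveOn.lt_of_hasDerivAt_eq_zero (hg : StrictConcaveOn ℝ S g) {x₀ x : ℝ}
    (hx₀ : x₀ ∈ S) (hx : x ∈ S) (hne : x ≠ x₀) (hd : HasDerivAt g 0 x₀) : g x < g x₀ := by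
  rcases hne.lt_or_gt with h | h
  · have hslope := hg.lt_slope_of_hasDerivAt hx hx₀ h hd
    rw [slope_def_field, lt_div_iff₀ (sub_pos.2 h)] at hslope
    linarith
  · have hslope := hg.slope_lt_of_hasDerivAt hx₀ hx h hd
    rw [slope_def_field, div_lt_iff₀ (sub_pos.2 h)] at hslope
    linarith

theorem StrictConcaveOn.eq_or_eq_of_map_eq (hg : StrictConcaveOn ℝ S g) {c x₁ x₂ x : ℝ}
    (hx₁ : x₁ ∈ S) (hx₂ : x₂ ∈ S) (hx : x ∈ S) (h₁₂ : x₁ < x₂)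
    (e₁ : g x₁ = c) (e₂ : g x₂ = c) (e : g x = c) : x = x₁ ∨ x = x₂ := by
  have between : ∀ {a b d}, a ∈ S → d ∈ S → a < b → b < d → g a = c → g d = c → g b ≠ c := by
    intro a b d ha hd hab hbd ea ed
    have hlt := hg.lt_on_openSegment ha hd (hab.trans hbd).ne
      (by rw [openSegment_eq_Ioo (hab.trans hbd)]; exact ⟨hab, hbd⟩)
    rw [ea, ed, min_self] at hlt
    exact hlt.ne'
  by_contra! h
  rcases h.1.lt_or_gt with h₁ | h₁
  · exact between hx hx₂ h₁ h₁₂ e e₂ e₁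
  · rcases h.2.lt_or_gt with h₂ | h₂
    · exact between hx₁ hx₂ h₁ h₂ e₁ e₂ e
    · exact between hx₁ hx h₁₂ h₂ e₁ e e₂

theorem StrictConcaveOn.exists_exactly_two_zeros {a b c : ℝ}
    (hg : StrictConcaveOn ℝ (Icc a b) g) (hgc : ContinuousOn g (Icc a b)) (hc : c ∈ Ioo a b)
    (ha : g a < 0) (hb : g b < 0) (hpos : 0 < g c) :
    ∃ x₁ x₂, x₁ ∈ Ioo a c ∧ x₂ ∈ Ioo c b ∧ g x₁ = 0 ∧ g x₂ = 0 ∧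
      ∀ x ∈ Icc a b, g x = 0 → x = x₁ ∨ x = x₂ := by
  obtain ⟨x₁, hx₁, e₁⟩ := intermediate_value_Ioo hc.1.le
    (hgc.mono (Icc_subset_Icc_right hc.2.le)) ⟨ha, hpos⟩
  obtain ⟨x₂, hx₂, e₂⟩ := intermediate_value_Ioo' hc.2.le
    (hgc.mono (Icc_subset_Icc_left hc.1.le)) ⟨hb, hpos⟩
  refine ⟨x₁, x₂, hx₁, hx₂, e₁, e₂, fun x hx e => ?_⟩
  exact hg.eq_or_eq_of_map_eq ⟨hx₁.1.le, (hx₁.2.trans hc.2).le⟩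
    ⟨(hc.1.trans hx₂.1).le, hx₂.2.le⟩ hx (hx₁.2.trans hx₂.1) e₁ e₂ e

end StrictConcave

theorem saddle_node_of_strictConcaveOn_of_strictMonoOn {g : ℝ × ℝ → ℝ} {δ : ℝ} (hδ : 0 < δ)
    (hg : Continuous g)
    (hconc : ∀ μ ∈ Icc (-δ) δ, StrictConcaveOn ℝ (Icc (-δ) δ) (fun x => g (x, μ)))
    (hmono : ∀ x ∈ Icc (-δ) δ, StrictMonoOn (fun μ => g (x, μ)) (Icc (-δ) δ))
    (h₀ : g (0, 0) = 0) (hd : HasDerivAt (fun x => g (x, 0)) 0 0) :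
    ∃ μ₀ > 0,
      (∀ μ ∈ Ioo (-μ₀) 0, ∀ x ∈ Ioo (-δ) δ, g (x, μ) ≠ 0) ∧
      (∀ x ∈ Ioo (-δ) δ, g (x, 0) = 0 ↔ x = 0) ∧
      (∀ μ ∈ Ioo 0 μ₀, ∃ x₁ x₂,
        x₁ ∈ Ioo (-δ) δ ∧ x₂ ∈ Ioo (-δ) δ ∧ x₁ < x₂ ∧ g (x₁, μ) = 0 ∧ g (x₂, μ) = 0 ∧
        ∀ x ∈ Ioo (-δ) δ, g (x, μ) = 0 → x = x₁ ∨ x = x₂) := by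
  have h0I : (0 : ℝ) ∈ Icc (-δ) δ := ⟨by linarith, hδ.le⟩
  have hneg : ∀ x ∈ Icc (-δ) δ, x ≠ 0 → g (x, 0) < 0 := fun x hx hne => by
    simpa only [h₀] using (hconc 0 h0I).lt_of_hasDerivAt_eq_zero h0I hx hne hd
  have hends : ∀ᶠ μ in 𝓝 0, g (-δ, μ) < 0 ∧ g (δ, μ) < 0 :=
    ((hg.comp (Continuous.prodMk_right (-δ))).continuousAt.eventually_lt continuousAt_const
      (hneg (-δ) ⟨le_rfl, by linarith⟩ (by linarith))).and
    ((hg.comp (Continuous.prodMk_right δ)).continuousAt.eventually_lt continuousAt_const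
      (hneg δ ⟨by linarith, le_rfl⟩ hδ.ne'))
  obtain ⟨ε, hε, hεends⟩ := Metric.eventually_nhds_iff.1 hends
  refine ⟨min ε δ, lt_min hε hδ, ?_, ?_, ?_⟩
  · rintro μ ⟨hμl, hμr⟩ x hx
    have hμI : μ ∈ Icc (-δ) δ := ⟨by linarith [min_le_right ε δ], by linarith⟩
    have hle : g (x, 0) ≤ 0 := by
      rcases eq_or_ne x 0 with rfl | hne
      · exact h₀.le
      · exact (hneg x (Ioo_subset_Icc_self hx) hne).le
    exact (lt_of_lt_of_le (hmono x (Ioo_subset_Icc_self hx) hμI h0I hμr) hle).ne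
  · refine fun x hx => ⟨fun hx₀ => ?_, fun h => h ▸ h₀⟩
    by_contra hne
    exact (hneg x (Ioo_subset_Icc_self hx) hne).ne hx₀
  · rintro μ ⟨hμl, hμr⟩
    have hμI : μ ∈ Icc (-δ) δ := ⟨by linarith, by linarith [min_le_right ε δ]⟩
    have hpos : 0 < g (0, μ) := by simpa only [h₀] using hmono 0 h0I h0I hμI hμl
    have hμε : dist μ 0 < ε := by
      rw [Real.dist_0_eq_abs, abs_of_pos hμl]
      exact hμr.trans_le (min_le_left ε δ)
    obtain ⟨hl, hr⟩ := hεends hμε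
    obtain ⟨x₁, x₂, hx₁, hx₂, e₁, e₂, huniq⟩ := (hconc μ hμI).exists_exactly_two_zeros
      (by fun_prop) ⟨neg_lt_zero.2 hδ, hδ⟩ hl hr hpos
    exact ⟨x₁, x₂, ⟨hx₁.1, hx₁.2.trans hδ⟩, ⟨(neg_lt_zero.2 hδ).trans hx₂.1, hx₂.2⟩,
      hx₁.2.trans hx₂.1, e₁, e₂, fun x hx => huniq x (Ioo_subset_Icc_self hx)⟩

theorem saddle_node_skeleton
    (f : ℝ × ℝ → ℝ) (r : ℕ) (hr : 2 ≤ r)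
    (hsmooth : ContDiff ℝ r f)
    (hf0 : f (0, 0) = 0)
    (hfx : deriv (fun x => f (x, 0)) 0 = 1)
    (hfμ : deriv (fun μ => f (0, μ)) 0 > 0)
    (hfxx : iteratedDeriv 2 (fun x => f (x, 0)) 0 < 0) :
    ∃ δ > 0, ∃ μ₀ > 0,
      (∀ μ ∈ Ioo (-μ₀) (0 : ℝ), ∀ x ∈ Ioo (-δ) δ, f (x, μ) ≠ x) ∧
      (∀ x ∈ Ioo (-δ) δ, f (x, 0) = x ↔ x = 0) ∧
      (∀ μ ∈ Ioo (0 : ℝ) μ₀, ∃ x₁ x₂,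
        x₁ ∈ Ioo (-δ) δ ∧ x₂ ∈ Ioo (-δ) δ ∧ x₁ < x₂ ∧
        f (x₁, μ) = x₁ ∧ f (x₂, μ) = x₂ ∧
        ∀ x ∈ Ioo (-δ) δ, f (x, μ) = x → x = x₁ ∨ x = x₂) := by
  have hf : ContDiff ℝ 2 f := hsmooth.of_le (by exact_mod_cast hr)
  have hfd : Differentiable ℝ f := hf.differentiable (by norm_num)
  rw [(hasDerivAt_partialFst (hfd _)).deriv] at hfx
  rw [(hasDerivAt_partialSnd (hfd _)).deriv] at hfμ
  rw [iteratedDeriv_eq_iterate, iterate_deriv_two_eq_partialFst_partialFst hf] at hfxx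
  have hfxx_cont : Continuous (partialFst (partialFst f)) :=
    (contDiff_partialFst (m := 0) (contDiff_partialFst (m := 1) hf (by norm_num))
      (by norm_num)).continuous
  have hfμ_cont : Continuous (partialSnd f) :=
    (contDiff_partialSnd (m := 0) hf (by norm_num)).continuous
  obtain ⟨δ, hδ, hbox⟩ := exists_forall_Icc_of_eventually_nhds_zero
    ((hfxx_cont.continuousAt.eventually_lt continuousAt_const hfxx).and
      (continuousAt_const.eventually_lt hfμ_cont.continuousAt hfμ))
  have hconc : ∀ μ ∈ Icc (-δ) δ, StrictConcaveOn ℝ (Icc (-δ) δ) (fun x => f (x, μ) - x) :=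
    fun μ hμ => (strictConcaveOn_of_partialFst_partialFst_neg hf (convex_Icc _ _)
      fun x hx => (hbox x hx μ hμ).1).sub_convexOn (convexOn_id (convex_Icc _ _))
  have hmono : ∀ x ∈ Icc (-δ) δ, StrictMonoOn (fun μ => f (x, μ) - x) (Icc (-δ) δ) :=
    fun x hx _ ha _ hb hab => sub_lt_sub_right (strictMonoOn_of_partialSnd_pos hfd
      (convex_Icc _ _) (fun μ hμ => (hbox x hx μ hμ).2) ha hb hab) x
  have hderiv : HasDerivAt (fun x => f (x, 0) - x) 0 0 := by
    have h := (hasDerivAt_partialFst (hfd (0, 0))).sub (hasDerivAt_id' 0)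
    rwa [hfx, sub_self] at h
  obtain ⟨μ₀, hμ₀, hbelow, hat, habove⟩ :=
    saddle_node_of_strictConcaveOn_of_strictMonoOn (g := fun p => f p - p.1) hδ
      (hf.continuous.sub continuous_fst) hconc hmono (by simp [hf0]) hderiv
  simp only [sub_eq_zero, sub_ne_zero] at hbelow hat habove
  exact ⟨δ, hδ, μ₀, hμ₀, hbelow, hat, habove⟩
end

section
/- Write f(x, μ) = −x + x·P(x, μ) with P C^r (r ≥ 2), P(0,0) = 0. Then f²(x, μ) = x + x·G(x, μ) where G is C^r with G(0,0) = 0, G_μ(0,0) = −2 f_{xμ}(0,0) and G_{xx}(0,0) = −(1/3)(3 f_{xx}(0,0)² + 2 f_{xxx}(0,0)). -/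
lemma hasDerivAt_id_mul_of_continuousAt (h : ℝ → ℝ) (hc : ContinuousAt h 0) :
    HasDerivAt (fun x => x * h x) (h 0) 0 := by
  rw [hasDerivAt_iff_tendsto_slope]
  have : ∀ x ∈ ({0}ᶜ : Set ℝ), h x = slope (fun x => x * h x) 0 x := by
    intro x hx
    have hx0 : x ≠ 0 := hx
    simp [slope_def_field]
    field_simp
  refine Filter.Tendsto.congr' ?_ (hc.continuousWithinAt.tendsto)
  exact Filter.eventuallyEq_of_mem self_mem_nhdsWithin this

theorem period_doubling_second_iterate_form
    (P : ℝ × ℝ → ℝ) (r : ℕ) (hr : 2 ≤ r)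
    (hP : ContDiff ℝ r P) (hP0 : P (0, 0) = 0)
    (f : ℝ × ℝ → ℝ) (hf : ∀ x μ : ℝ, f (x, μ) = -x + x * P (x, μ)) :
    ∃ G : ℝ × ℝ → ℝ, ContDiff ℝ r G ∧
      (∀ x μ : ℝ, f (f (x, μ), μ) = x + x * G (x, μ)) ∧
      G (0, 0) = 0 ∧
      deriv (fun μ => G (0, μ)) 0
        = -2 * deriv (fun μ => deriv (fun x => f (x, μ)) 0) 0 ∧
      iteratedDeriv 2 (fun x => G (x, 0)) 0
        = -(1 / 3) * (3 * (iteratedDeriv 2 (fun x => f (x, 0)) 0) ^ 2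
            + 2 * iteratedDeriv 3 (fun x => f (x, 0)) 0) := by
  classical
  set G : ℝ × ℝ → ℝ :=
    fun p => (P p - 1) * (P (p.1 * (P p - 1), p.2) - 1) - 1 with hGdef
  have hPd : Differentiable ℝ P := hP.differentiable (by exact_mod_cast (show r ≠ 0 by omega))
  -- smoothness of G
  have hG : ContDiff ℝ r G := by
    have hinner : ContDiff ℝ r (fun p : ℝ × ℝ => (p.1 * (P p - 1), p.2)) :=
      (contDiff_fst.mul (hP.sub contDiff_const)).prodMk contDiff_snd
    exact ((hP.sub contDiff_const).mul ((hP.comp hinner).sub contDiff_const)).sub contDiff_const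
  refine ⟨G, hG, ?_, ?_, ?_, ?_⟩
  · intro x μ
    have h1 : f (x, μ) = x * (P (x, μ) - 1) := by rw [hf]; ring
    rw [h1, hf]; simp only [hGdef]; ring
  · show (P (0, 0) - 1) * (P (0 * (P (0, 0) - 1), 0) - 1) - 1 = 0
    rw [hP0]; norm_num
    exact hP0
  · -- the μ-derivative
    set w : ℝ → ℝ := fun μ => P (0, μ) with hwdef
    have hwd : Differentiable ℝ w := hPd.comp ((differentiable_const _).prodMk differentiable_id)
    have hw0 : w 0 = 0 := hP0
    have hgw : (fun μ => G (0, μ)) = fun μ => (w μ - 1) * (w μ - 1) - 1 := by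
      funext μ; simp [hGdef, hwdef]
    have hL : deriv (fun μ => G (0, μ)) 0 = -2 * deriv w 0 := by
      rw [hgw]
      have h : HasDerivAt (fun μ => (w μ - 1) * (w μ - 1) - 1)
          (deriv w 0 * (w 0 - 1) + (w 0 - 1) * deriv w 0) 0 :=
        (((hwd 0).hasDerivAt.sub_const 1).mul ((hwd 0).hasDerivAt.sub_const 1)).sub_const 1
      rw [h.deriv, hw0]; ring
    have hinner : ∀ μ : ℝ, deriv (fun x => f (x, μ)) 0 = w μ - 1 := by
      intro μ
      have hdx : DifferentiableAt ℝ (fun x => P (x, μ)) 0 :=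
        (hPd.comp (differentiable_id.prodMk (differentiable_const _))) 0
      have h : HasDerivAt (fun x => f (x, μ))
          (1 * (P (0, μ) - 1) + 0 * deriv (fun x => P (x, μ)) 0) 0 := by
        have := (hasDerivAt_id 0).mul (hdx.hasDerivAt.sub_const 1)
        refine this.congr_of_eventuallyEq ?_
        filter_upwards with x
        rw [hf]; simp only [Pi.mul_apply, id_eq]; ring
      rw [h.deriv]; simp [hwdef]
    have hR : deriv (fun μ => deriv (fun x => f (x, μ)) 0) 0 = deriv w 0 := by
      have : (fun μ => deriv (fun x => f (x, μ)) 0) = fun μ => w μ - 1 := funext hinner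
      rw [this, deriv_sub_const]
    rw [hL, hR]
  · -- the xx-derivative
    set q : ℝ → ℝ := fun x => P (x, 0) with hqdef
    have hq : ContDiff ℝ 2 q :=
      (hP.comp (contDiff_id.prodMk contDiff_const)).of_le (by exact_mod_cast hr)
    have hqd : Differentiable ℝ q := hq.differentiable (by norm_num)
    have hq1 : ContDiff ℝ 1 (deriv q) := by
      have := (contDiff_succ_iff_deriv (n := 1)).mp (by exact_mod_cast hq)
      exact this.2.2
    have hq1d : Differentiable ℝ (deriv q) := hq1.differentiable (by norm_num)
    have hq2c : Continuous (deriv (deriv q)) := hq1.continuous_deriv le_rfl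
    set q1 : ℝ → ℝ := deriv q with hq1def
    set q2 : ℝ → ℝ := deriv q1 with hq2def
    have hq0 : q 0 = 0 := hP0
    set u : ℝ → ℝ := fun x => x * (q x - 1) with hudef
    set u1 : ℝ → ℝ := fun x => (q x - 1) + x * q1 x with hu1def
    have hu : ∀ x, HasDerivAt u (u1 x) x := by
      intro x
      have h := (hasDerivAt_id x).mul ((hqd x).hasDerivAt.sub_const 1)
      simp only [id_eq, one_mul] at h
      exact h
    have hu0 : u 0 = 0 := by simp [hudef]
    have hu10 : u1 0 = -1 := by simp [hu1def, hq0]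
    -- f(·,0) = u
    have hfu : (fun x => f (x, 0)) = u := by
      funext x; rw [hf, hudef]; ring
    have hderivu : deriv u = u1 := funext fun x => (hu x).deriv
    set u2 : ℝ → ℝ := fun x => q1 x + (q1 x + x * q2 x) with hu2def
    have hu1' : ∀ x, HasDerivAt u1 (u2 x) x := by
      intro x
      have h1 : HasDerivAt (fun y => q y - 1) (q1 x) x := (hqd x).hasDerivAt.sub_const 1
      have h2 : HasDerivAt (fun y => y * q1 y) (1 * q1 x + x * q2 x) x :=
        (hasDerivAt_id x).mul (hq1d x).hasDerivAt
      exact (h1.add h2).congr_deriv (by show _ = q1 x + (q1 x + x * q2 x); ring)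
    have hderivu1 : deriv u1 = u2 := funext fun x => (hu1' x).deriv
    -- iterated derivs of u
    have hit2u : iteratedDeriv 2 u 0 = 2 * q1 0 := by
      rw [show (2:ℕ) = 1 + 1 from rfl, iteratedDeriv_succ, iteratedDeriv_one, hderivu, hderivu1]
      simp only [hu2def]
      norm_num
      ring
    have hit3u : iteratedDeriv 3 u 0 = 3 * q2 0 := by
      rw [show (3:ℕ) = 2 + 1 from rfl, iteratedDeriv_succ,
        iteratedDeriv_succ, iteratedDeriv_one,
        hderivu, hderivu1]
      have hx : HasDerivAt (fun x => x * q2 x) (q2 0) 0 :=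
        hasDerivAt_id_mul_of_continuousAt q2 hq2c.continuousAt
      have h : HasDerivAt u2 (q2 0 + (q2 0 + q2 0)) 0 :=
        (hq1d 0).hasDerivAt.add ((hq1d 0).hasDerivAt.add hx)
      rw [h.deriv]; ring
    -- G(·,0) = g
    set g : ℝ → ℝ := fun x => (q x - 1) * (q (u x) - 1) - 1 with hgdef
    have hGg : (fun x => G (x, 0)) = g := by
      funext x; simp [hGdef, hgdef, hqdef, hudef]
    have hqu : ∀ x, HasDerivAt (fun y => q (u y)) (q1 (u x) * u1 x) x := by
      intro x
      exact ((hqd (u x)).hasDerivAt).comp x (hu x)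
    set g1 : ℝ → ℝ := fun x => q1 x * (q (u x) - 1) + (q x - 1) * (q1 (u x) * u1 x) with hg1def
    have hg : ∀ x, HasDerivAt g (g1 x) x := by
      intro x
      exact (((hqd x).hasDerivAt.sub_const 1).mul ((hqu x).sub_const 1)).sub_const 1
    have hderivg : deriv g = g1 := funext fun x => (hg x).deriv
    -- deriv g1 at 0
    have hq1u : HasDerivAt (fun y => q1 (u y)) (q2 (u 0) * u1 0) 0 :=
      ((hq1d (u 0)).hasDerivAt).comp 0 (hu 0)
    have hg1' : HasDerivAt g1
        ((q2 0 * (q (u 0) - 1) + q1 0 * (q1 (u 0) * u1 0))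
          + (q1 0 * (q1 (u 0) * u1 0)
            + (q 0 - 1) * ((q2 (u 0) * u1 0) * u1 0 + q1 (u 0) * u2 0))) 0 := by
      refine HasDerivAt.add ?_ ?_
      · exact ((hq1d 0).hasDerivAt).mul ((hqu 0).sub_const 1)
      · exact ((hqd 0).hasDerivAt.sub_const 1).mul (hq1u.mul (hu1' 0))
    have h2g : iteratedDeriv 2 g 0 = deriv (deriv g) 0 := by
      rw [show (2:ℕ) = 1 + 1 from rfl, iteratedDeriv_succ, iteratedDeriv_one]
    have hit2g : iteratedDeriv 2 g 0 = -2 * q2 0 - 4 * q1 0 ^ 2 := by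
      rw [h2g, hderivg, hg1'.deriv]
      simp only [hu0, hu10, hu2def, hq0]
      ring
    simp only [hfu, hGg]
    rw [hit2g, hit2u, hit3u]; ring
end
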